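/- Let {G^A_i} and {G^B_j} be orthogonal operator bases on ℂ^d (Tr(G† G') = d·δ, G_0 = I, G_i Hermitian traceless for i ≥ 1), C = [c_{ij}] a real (d²−1)×(d²−1) matrix, and S = ∑_{i,j=1}^{d^2-1} c_{ij} G^A_i ⊗ G^B_j. If a density matrix ρ on ℂ^d ⊗ ℂ^d satisfies |Tr(S ρ)| > (d−1)·‖C‖, where ‖C‖ is the operator norm of C, then ρ is not separable, i.e., ρ is not a finite convex combination of Kronecker products of density matrices. -/

import Mathlib

open Matrix
open Kronecker
open scoped BigOperators ComplexOrder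

/-- The operator norm (largest singular value) of a real square matrix,
realized as the norm of the induced continuous linear map on Euclidean space. -/
noncomputable def opNorm {n : ℕ} (C : Matrix (Fin n) (Fin n) ℝ) : ℝ :=
  ‖(Matrix.toEuclideanCLM (𝕜 := ℝ) C :
      EuclideanSpace ℝ (Fin n) →L[ℝ] EuclideanSpace ℝ (Fin n))‖

def IsDensityMatrix {n : Type*} [Fintype n] (ρ : Matrix n n ℂ) : Prop :=
  ρ.IsHermitian ∧ ρ.PosSemidef ∧ ρ.trace = 1

def IsSeparableState {d : ℕ} (σ : Matrix (Fin d × Fin d) (Fin d × Fin d) ℂ) : Prop :=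
  ∃ (m : ℕ) (p : Fin m → ℝ) (ρA ρB : Fin m → Matrix (Fin d) (Fin d) ℂ),
    (∀ k, 0 ≤ p k) ∧ (∑ k, p k = 1) ∧
    (∀ k, IsDensityMatrix (ρA k)) ∧ (∀ k, IsDensityMatrix (ρB k)) ∧
    σ = ∑ k, (p k : ℂ) • (ρA k ⊗ₖ ρB k)

/-!
For a product state `ρA ⊗ ρB` the correlation `Tr(S (ρA ⊗ ρB))` equals `⟪a, C b⟫`, where
`a i = Tr(G^A_i ρA)` and `b j = Tr(G^B_j ρB)` are the (real) Bloch vectors of the two factors.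
Bessel's inequality for the Hilbert–Schmidt orthogonal family `G_k` bounds
`1 + ‖a‖² = ∑_k |Tr(G_k ρA)|²` by `d · Tr(ρA²) ≤ d`, so `‖a‖, ‖b‖ ≤ √(d - 1)` and
`|Tr(S (ρA ⊗ ρB))| ≤ (d - 1)‖C‖`. The bound is linear in the state, hence survives convex
combinations and holds for every separable state.
-/

open scoped InnerProductSpace

theorem sum_norm_inner_sq_le_of_orthogonal {ι 𝕜 E : Type*} [DecidableEq ι] [RCLike 𝕜]
    [NormedAddCommGroup E] [InnerProductSpace 𝕜 E] {v : ι → E} {c : ℝ} (hc : 0 < c)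
    (hv : ∀ i j, ⟪v i, v j⟫_𝕜 = if i = j then (c : 𝕜) else 0) (s : Finset ι) (x : E) :
    ∑ i ∈ s, ‖⟪v i, x⟫_𝕜‖ ^ 2 ≤ c * ‖x‖ ^ 2 := by
  set r : ℝ := (√c)⁻¹
  have hrc : r * (r * c) = 1 := by
    rw [← mul_assoc, ← mul_inv, Real.mul_self_sqrt hc.le, inv_mul_cancel₀ hc.ne']
  have hw : Orthonormal 𝕜 fun i => (r : 𝕜) • v i := by
    rw [orthonormal_iff_ite]
    intro i j
    rw [inner_smul_left, inner_smul_right, hv, RCLike.conj_ofReal]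
    split_ifs
    · exact_mod_cast hrc
    · simp
  have hBessel := hw.sum_inner_products_le (s := s) x
  simp only [inner_smul_left, RCLike.conj_ofReal, norm_mul, RCLike.norm_ofReal, mul_pow, sq_abs,
    ← Finset.mul_sum] at hBessel
  calc ∑ i ∈ s, ‖⟪v i, x⟫_𝕜‖ ^ 2 = c * (r ^ 2 * ∑ i ∈ s, ‖⟪v i, x⟫_𝕜‖ ^ 2) := by
        rw [← mul_assoc, mul_comm c, sq, mul_assoc r, hrc, one_mul]
    _ ≤ c * ‖x‖ ^ 2 := by gcongr

namespace Matrix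

theorem inner_toLp_vec {m 𝕜 : Type*} [RCLike 𝕜] [Fintype m] (A B : Matrix m m 𝕜) :
    ⟪WithLp.toLp 2 A.vec, WithLp.toLp 2 B.vec⟫_𝕜 = (Aᴴ * B).trace := by
  rw [EuclideanSpace.inner_toLp_toLp, dotProduct_comm, star_vec_dotProduct_vec]

theorem trace_conjStarAlgAut {m 𝕜 : Type*} [RCLike 𝕜] [Fintype m] [DecidableEq m]
    (u : unitary (Matrix m m 𝕜)) (A : Matrix m m 𝕜) :
    (Unitary.conjStarAlgAut 𝕜 _ u A).trace = A.trace := by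
  rw [Unitary.conjStarAlgAut_apply, trace_mul_cycle, Unitary.coe_star_mul_self, one_mul]

theorem IsHermitian.trace_mul_self_eq_sum_eigenvalues_sq {m 𝕜 : Type*} [RCLike 𝕜] [Fintype m]
    [DecidableEq m] {A : Matrix m m 𝕜} (hA : A.IsHermitian) :
    (A * A).trace = ∑ i, (hA.eigenvalues i : 𝕜) ^ 2 := by
  conv_lhs => rw [hA.spectral_theorem, ← map_mul, trace_conjStarAlgAut, diagonal_mul_diagonal,
    trace_diagonal]
  simp [sq]

theorem IsHermitian.ofReal_re_trace_mul {m : Type*} [Fintype m] {A B : Matrix m m ℂ}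
    (hA : A.IsHermitian) (hB : B.IsHermitian) : ((A * B).trace.re : ℂ) = (A * B).trace := by
  rw [← Complex.conj_eq_iff_re, ← Complex.star_def, ← trace_conjTranspose, conjTranspose_mul,
    hA.eq, hB.eq, trace_mul_comm]

theorem sum_norm_trace_conjTranspose_mul_sq_le {ι m 𝕜 : Type*} [DecidableEq ι] [RCLike 𝕜]
    [Fintype m] {G : ι → Matrix m m 𝕜} {c : ℝ} (hc : 0 < c)
    (hG : ∀ k l, ((G k)ᴴ * G l).trace = if k = l then (c : 𝕜) else 0)
    (s : Finset ι) (A : Matrix m m 𝕜) :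
    ∑ k ∈ s, ‖((G k)ᴴ * A).trace‖ ^ 2 ≤ c * RCLike.re (Aᴴ * A).trace := by
  have hv : ∀ k l, ⟪WithLp.toLp 2 (G k).vec, WithLp.toLp 2 (G l).vec⟫_𝕜 =
      if k = l then (c : 𝕜) else 0 := by
    simpa only [inner_toLp_vec] using hG
  have := sum_norm_inner_sq_le_of_orthogonal hc hv s (WithLp.toLp 2 A.vec)
  simpa only [@norm_sq_eq_re_inner 𝕜, inner_toLp_vec] using this

end Matrix

theorem IsDensityMatrix.re_trace_mul_self_le_one {m : Type*} [Fintype m] {ρ : Matrix m m ℂ}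
    (hρ : IsDensityMatrix ρ) : (ρ * ρ).trace.re ≤ 1 := by
  classical
  obtain ⟨hH, hpsd, htr⟩ := hρ
  have hsum : ∑ i, hH.eigenvalues i = 1 := by
    have := congrArg Complex.re hH.trace_eq_sum_eigenvalues
    simpa [htr] using this.symm
  rw [hH.trace_mul_self_eq_sum_eigenvalues_sq]
  norm_cast
  calc ∑ i, hH.eigenvalues i ^ 2 ≤ (∑ i, hH.eigenvalues i) ^ 2 :=
        Finset.sum_sq_le_sq_sum_of_nonneg fun i _ => hpsd.eigenvalues_nonneg i
    _ = 1 := by rw [hsum, one_pow]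

noncomputable def blochVector {d n : ℕ} (G : Fin (n + 1) → Matrix (Fin d) (Fin d) ℂ)
    (ρ : Matrix (Fin d) (Fin d) ℂ) : EuclideanSpace ℝ (Fin n) :=
  WithLp.toLp 2 fun i => (G i.succ * ρ).trace.re

theorem IsDensityMatrix.norm_blochVector_sq_le {d n : ℕ}
    {G : Fin (n + 1) → Matrix (Fin d) (Fin d) ℂ}
    (hG : ∀ k l, ((G k)ᴴ * G l).trace = if k = l then (d : ℂ) else 0) (hG0 : G 0 = 1)
    (hGherm : ∀ i : Fin n, (G i.succ).IsHermitian) {ρ : Matrix (Fin d) (Fin d) ℂ}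
    (hρ : IsDensityMatrix ρ) :
    ‖blochVector G ρ‖ ^ 2 ≤ d - 1 := by
  have hd : (0 : ℝ) < d := by
    rcases Nat.eq_zero_or_pos d with rfl | h
    · -- over `Fin 0` every trace vanishes, so there is no density matrix
      simpa [trace] using hρ.2.2
    · exact_mod_cast h
  have hBessel := Matrix.sum_norm_trace_conjTranspose_mul_sq_le (c := d) hd (by simpa using hG)
    Finset.univ ρ
  rw [Fin.sum_univ_succ, hG0, conjTranspose_one, one_mul, hρ.2.2, norm_one, one_pow, hρ.1.eq]
    at hBessel
  have hcoord : ∀ i : Fin n, ‖((G i.succ)ᴴ * ρ).trace‖ ^ 2 = blochVector G ρ i ^ 2 := by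
    intro i
    rw [(hGherm i).eq, ← (hGherm i).ofReal_re_trace_mul hρ.1, Complex.norm_real,
      Real.norm_eq_abs, sq_abs]
    rfl
  rw [EuclideanSpace.norm_sq_eq]
  simp_rw [Real.norm_eq_abs, sq_abs, ← hcoord]
  have hpurity : RCLike.re (ρ * ρ).trace ≤ 1 := hρ.re_trace_mul_self_le_one
  nlinarith

theorem trace_mul_kronecker_eq_inner_blochVector {d n : ℕ}
    {GA GB : Fin (n + 1) → Matrix (Fin d) (Fin d) ℂ}
    (hGAherm : ∀ i : Fin n, (GA i.succ).IsHermitian)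
    (hGBherm : ∀ i : Fin n, (GB i.succ).IsHermitian) (C : Matrix (Fin n) (Fin n) ℝ)
    {ρA ρB : Matrix (Fin d) (Fin d) ℂ} (hρA : ρA.IsHermitian) (hρB : ρB.IsHermitian) :
    ((∑ i : Fin n, ∑ j : Fin n, (C i j : ℂ) • (GA i.succ ⊗ₖ GB j.succ)) * (ρA ⊗ₖ ρB)).trace =
      (⟪blochVector GA ρA, toEuclideanCLM (𝕜 := ℝ) C (blochVector GB ρB)⟫_ℝ : ℂ) := by
  simp only [blochVector, toEuclideanCLM_toLp, EuclideanSpace.inner_toLp_toLp, dotProduct,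
    mulVec, star_trivial, Finset.sum_mul, trace_sum, smul_mul_assoc, trace_smul,
    ← mul_kronecker_mul, trace_kronecker, smul_eq_mul]
  push_cast
  refine Finset.sum_congr rfl fun i _ => Finset.sum_congr rfl fun j _ => ?_
  rw [(hGAherm i).ofReal_re_trace_mul hρA, (hGBherm j).ofReal_re_trace_mul hρB]
  ring

theorem norm_trace_mul_kronecker_le {d n : ℕ} {GA GB : Fin (n + 1) → Matrix (Fin d) (Fin d) ℂ}
    (hGA : ∀ k l, ((GA k)ᴴ * GA l).trace = if k = l then (d : ℂ) else 0)
    (hGB : ∀ k l, ((GB k)ᴴ * GB l).trace = if k = l then (d : ℂ) else 0)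
    (hGA0 : GA 0 = 1) (hGB0 : GB 0 = 1)
    (hGAherm : ∀ i : Fin n, (GA i.succ).IsHermitian)
    (hGBherm : ∀ i : Fin n, (GB i.succ).IsHermitian) (C : Matrix (Fin n) (Fin n) ℝ)
    {ρA ρB : Matrix (Fin d) (Fin d) ℂ} (hρA : IsDensityMatrix ρA) (hρB : IsDensityMatrix ρB) :
    ‖((∑ i : Fin n, ∑ j : Fin n, (C i j : ℂ) • (GA i.succ ⊗ₖ GB j.succ)) * (ρA ⊗ₖ ρB)).trace‖ ≤
      ((d : ℝ) - 1) * opNorm C := by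
  rw [trace_mul_kronecker_eq_inner_blochVector hGAherm hGBherm C hρA.1 hρB.1, Complex.norm_real,
    Real.norm_eq_abs]
  set a := blochVector GA ρA
  set b := blochVector GB ρB
  have ha := hρA.norm_blochVector_sq_le hGA hGA0 hGAherm
  have hb := hρB.norm_blochVector_sq_le hGB hGB0 hGBherm
  have hab : ‖a‖ * ‖b‖ ≤ d - 1 := by nlinarith [two_mul_le_add_sq ‖a‖ ‖b‖]
  calc |⟪a, toEuclideanCLM (𝕜 := ℝ) C b⟫_ℝ| ≤ ‖a‖ * ‖toEuclideanCLM (𝕜 := ℝ) C b‖ :=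
        abs_real_inner_le_norm _ _
    _ ≤ ‖a‖ * (opNorm C * ‖b‖) := by gcongr; exact ContinuousLinearMap.le_opNorm _ _
    _ = opNorm C * (‖a‖ * ‖b‖) := by ring
    _ ≤ opNorm C * (d - 1) := by gcongr; exact norm_nonneg _
    _ = (d - 1) * opNorm C := mul_comm _ _

theorem IsSeparableState.norm_trace_mul_le {d : ℕ}
    {σ : Matrix (Fin d × Fin d) (Fin d × Fin d) ℂ}
    (hσ : IsSeparableState σ) (S : Matrix (Fin d × Fin d) (Fin d × Fin d) ℂ) {M : ℝ}
    (hM : ∀ ρA ρB, IsDensityMatrix ρA → IsDensityMatrix ρB → ‖(S * (ρA ⊗ₖ ρB)).trace‖ ≤ M) :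
    ‖(S * σ).trace‖ ≤ M := by
  obtain ⟨m, p, ρA, ρB, hp0, hp1, hρA, hρB, rfl⟩ := hσ
  calc ‖(S * ∑ k, (p k : ℂ) • (ρA k ⊗ₖ ρB k)).trace‖
      = ‖∑ k, (p k : ℂ) * (S * (ρA k ⊗ₖ ρB k)).trace‖ := by
        simp only [Finset.mul_sum, trace_sum, mul_smul_comm, trace_smul, smul_eq_mul]
    _ ≤ ∑ k, p k * ‖(S * (ρA k ⊗ₖ ρB k)).trace‖ := by
        refine (norm_sum_le _ _).trans_eq (Finset.sum_congr rfl fun k _ => ?_)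
        rw [norm_mul, Complex.norm_real, Real.norm_of_nonneg (hp0 k)]
    _ ≤ ∑ k, p k * M := by gcongr with k; exacts [hp0 k, hM _ _ (hρA k) (hρB k)]
    _ = M := by rw [← Finset.sum_mul, hp1, one_mul]

theorem stmt5_general (d n : ℕ)
    (GA GB : Fin (n + 1) → Matrix (Fin d) (Fin d) ℂ)
    (hGA : ∀ k l, ((GA k)ᴴ * GA l).trace = if k = l then (d : ℂ) else 0)
    (hGB : ∀ k l, ((GB k)ᴴ * GB l).trace = if k = l then (d : ℂ) else 0)
    (hGA0 : GA 0 = 1) (hGB0 : GB 0 = 1)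
    (hGAherm : ∀ i : Fin n, (GA i.succ).IsHermitian)
    (hGBherm : ∀ i : Fin n, (GB i.succ).IsHermitian)
    (C : Matrix (Fin n) (Fin n) ℝ)
    (S : Matrix (Fin d × Fin d) (Fin d × Fin d) ℂ)
    (hS : S = ∑ i : Fin n, ∑ j : Fin n, (C i j : ℂ) • (GA i.succ ⊗ₖ GB j.succ))
    (ρ : Matrix (Fin d × Fin d) (Fin d × Fin d) ℂ)
    (hviol : ((d : ℝ) - 1) * opNorm C < ‖(S * ρ).trace‖) :
    ¬ IsSeparableState ρ := by
  intro hsep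
  have hproduct : ∀ ρA ρB, IsDensityMatrix ρA → IsDensityMatrix ρB →
      ‖(S * (ρA ⊗ₖ ρB)).trace‖ ≤ ((d : ℝ) - 1) * opNorm C := fun _ _ hρA hρB =>
    hS ▸ norm_trace_mul_kronecker_le hGA hGB hGA0 hGB0 hGAherm hGBherm C hρA hρB
  exact (hsep.norm_trace_mul_le S hproduct).not_gt hviol

/-- If a density matrix `ρ` on `ℂ^d ⊗ ℂ^d` satisfies
`|Tr(Sρ)| > (d−1)‖C‖` for `S = ∑_{i,j≥1} c_{ij} G^A_i ⊗ G^B_j`, then `ρ` is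
not separable. -/
theorem stmt5 (d n : ℕ) (hn : n + 1 = d ^ 2)
    (GA GB : Fin (n + 1) → Matrix (Fin d) (Fin d) ℂ)
    (hGA : ∀ k l, ((GA k)ᴴ * GA l).trace = if k = l then (d : ℂ) else 0)
    (hGB : ∀ k l, ((GB k)ᴴ * GB l).trace = if k = l then (d : ℂ) else 0)
    (hGA0 : GA 0 = 1) (hGB0 : GB 0 = 1)
    (hGAtr : ∀ i : Fin n, (GA i.succ).trace = 0)
    (hGBtr : ∀ i : Fin n, (GB i.succ).trace = 0)
    (hGAherm : ∀ i : Fin n, (GA i.succ).IsHermitian)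
    (hGBherm : ∀ i : Fin n, (GB i.succ).IsHermitian)
    (C : Matrix (Fin n) (Fin n) ℝ)
    (S : Matrix (Fin d × Fin d) (Fin d × Fin d) ℂ)
    (hS : S = ∑ i : Fin n, ∑ j : Fin n, (C i j : ℂ) • (GA i.succ ⊗ₖ GB j.succ))
    (ρ : Matrix (Fin d × Fin d) (Fin d × Fin d) ℂ) (hρ : IsDensityMatrix ρ)
    (hviol : ((d : ℝ) - 1) * opNorm C < ‖(S * ρ).trace‖) :
    ¬ IsSeparableState ρ :=
  stmt5_general d n GA GB hGA hGB hGA0 hGB0 hGAherm hGBherm C S hS ρ hviol
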